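/- arXiv:1410.1599 — 4 statements merged into one kernel-verified Lean document; each statement's English description precedes it below -/
import Mathlib

section
/- Let R be a (not necessarily commutative) ring and let A11, A12, A21, A22 be n×n matrices over R forming the 2×2 block matrix A, and B11, B12, B21, B22 be n×n matrices over R forming the 2×2 block matrix B. Define the seven Strassen products P1 = (A11 + A22)(B11 + B22), P2 = (A21 + A22)B11, P3 = A11(B12 − B22), P4 = A22(B21 − B11), P5 = (A11 + A12)B22, P6 = (A21 − A11)(B11 + B12), P7 = (A12 − A22)(B21 + B22). Then the 2×2 block matrix with blocks C11 = P1 + P4 − P5 + P7, C12 = P3 + P5, C21 = P2 + P4, C22 = P1 + P3 − P2 + P6 equals the matrix product A·B. -/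
theorem strassen_correct {R : Type*} [Ring R] {n : ℕ}
    (A11 A12 A21 A22 B11 B12 B21 B22 : Matrix (Fin n) (Fin n) R)
    (P1 P2 P3 P4 P5 P6 P7 : Matrix (Fin n) (Fin n) R)
    (hP1 : P1 = (A11 + A22) * (B11 + B22))
    (hP2 : P2 = (A21 + A22) * B11)
    (hP3 : P3 = A11 * (B12 - B22))
    (hP4 : P4 = A22 * (B21 - B11))
    (hP5 : P5 = (A11 + A12) * B22)
    (hP6 : P6 = (A21 - A11) * (B11 + B12))
    (hP7 : P7 = (A12 - A22) * (B21 + B22)) :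
    Matrix.fromBlocks (P1 + P4 - P5 + P7) (P3 + P5) (P2 + P4) (P1 + P3 - P2 + P6) =
      Matrix.fromBlocks A11 A12 A21 A22 * Matrix.fromBlocks B11 B12 B21 B22 := by
  subst hP1 hP2 hP3 hP4 hP5 hP6 hP7
  rw [Matrix.fromBlocks_multiply]
  congr 1 <;> noncomm_ring
end

section
/- Let R be a ring and let A11, A12, A21, A22 be n×n matrices over R forming the 2×2 block matrix A, and B11, B12, B21, B22 be n×n matrices over R forming the 2×2 block matrix B. Define S1 = A21 + A22, S2 = S1 − A11, S3 = A11 − A21, S4 = A12 − S2, S5 = B12 − B11, S6 = B22 − S5, S7 = B22 − B12, S8 = S6 − B21; then M1 = S2·S6, M2 = A11·B11, M3 = A12·B21, M4 = S3·S7, M5 = S1·S5, M6 = S4·B22, M7 = A22·S8; and T1 = M1 + M2, T2 = T1 + M4. Then the 2×2 block matrix with blocks C11 = M2 + M3, C12 = T1 + M5 + M6, C21 = T2 − M7, C22 = T2 + M5 equals the matrix product A·B (Winograd's variant of Strassen's algorithm is correct). -/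
theorem winograd_correct {R : Type*} [Ring R] {n : ℕ}
    (A11 A12 A21 A22 B11 B12 B21 B22 : Matrix (Fin n) (Fin n) R)
    (S1 S2 S3 S4 S5 S6 S7 S8 M1 M2 M3 M4 M5 M6 M7 T1 T2 : Matrix (Fin n) (Fin n) R)
    (hS1 : S1 = A21 + A22) (hS2 : S2 = S1 - A11)
    (hS3 : S3 = A11 - A21) (hS4 : S4 = A12 - S2)
    (hS5 : S5 = B12 - B11) (hS6 : S6 = B22 - S5)
    (hS7 : S7 = B22 - B12) (hS8 : S8 = S6 - B21)
    (hM1 : M1 = S2 * S6) (hM2 : M2 = A11 * B11) (hM3 : M3 = A12 * B21)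
    (hM4 : M4 = S3 * S7) (hM5 : M5 = S1 * S5) (hM6 : M6 = S4 * B22)
    (hM7 : M7 = A22 * S8)
    (hT1 : T1 = M1 + M2) (hT2 : T2 = T1 + M4) :
    Matrix.fromBlocks (M2 + M3) (T1 + M5 + M6) (T2 - M7) (T2 + M5) =
      Matrix.fromBlocks A11 A12 A21 A22 * Matrix.fromBlocks B11 B12 B21 B22 := by
  subst hS1 hS2 hS3 hS4 hS5 hS6 hS7 hS8 hM1 hM2 hM3 hM4 hM5 hM6 hM7 hT1 hT2
  rw [Matrix.fromBlocks_multiply]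
  congr 1 <;> noncomm_ring
end

section
/- Let R be a ring and A11, A12, A21, A22, B11, B12, B21, B22 be n×n matrices over R. Define Winograd's intermediate quantities S2 = (A21 + A22) − A11, S5 = B12 − B11, S6 = B22 − S5, M1 = S2·S6, M2 = A11·B11, M3 = A12·B21, M4 = (A11 − A21)·(B22 − B12), M5 = (A21 + A22)·S5, M6 = (A12 − S2)·B22, T1 = M1 + M2, T2 = T1 + M4. Then T1 + M5 + M6 = A11·B12 + A12·B22. -/
theorem winograd_block12 {R : Type*} [Ring R] {n : ℕ}
    (A11 A12 A21 A22 B11 B12 B21 B22 : Matrix (Fin n) (Fin n) R)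
    (S2 S5 S6 M1 M2 M3 M4 M5 M6 T1 T2 : Matrix (Fin n) (Fin n) R)
    (hS2 : S2 = (A21 + A22) - A11)
    (hS5 : S5 = B12 - B11)
    (hS6 : S6 = B22 - S5)
    (hM1 : M1 = S2 * S6) (hM2 : M2 = A11 * B11) (hM3 : M3 = A12 * B21)
    (hM4 : M4 = (A11 - A21) * (B22 - B12))
    (hM5 : M5 = (A21 + A22) * S5)
    (hM6 : M6 = (A12 - S2) * B22)
    (hT1 : T1 = M1 + M2) (hT2 : T2 = T1 + M4) :
    T1 + M5 + M6 = A11 * B12 + A12 * B22 := by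
  subst hS2 hS5 hS6 hM1 hM2 hM3 hM4 hM5 hM6 hT1 hT2
  noncomm_ring
end

section
/- Let R be a ring and A11, A12, A21, A22, B11, B12, B21, B22 be n×n matrices over R. Define Winograd's intermediate quantities S2 = (A21 + A22) − A11, S5 = B12 − B11, S6 = B22 − S5, S8 = S6 − B21, M1 = S2·S6, M2 = A11·B11, M4 = (A11 − A21)·(B22 − B12), M7 = A22·S8, T2 = M1 + M2 + M4. Then T2 − M7 = A21·B11 + A22·B21. -/
theorem winograd_block21 {R : Type*} [Ring R] {n : ℕ}
    (A11 A12 A21 A22 B11 B12 B21 B22 : Matrix (Fin n) (Fin n) R)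
    (S2 S5 S6 S8 M1 M2 M4 M7 T2 : Matrix (Fin n) (Fin n) R)
    (hS2 : S2 = (A21 + A22) - A11)
    (hS5 : S5 = B12 - B11)
    (hS6 : S6 = B22 - S5)
    (hS8 : S8 = S6 - B21)
    (hM1 : M1 = S2 * S6) (hM2 : M2 = A11 * B11)
    (hM4 : M4 = (A11 - A21) * (B22 - B12))
    (hM7 : M7 = A22 * S8)
    (hT2 : T2 = M1 + M2 + M4) :
    T2 - M7 = A21 * B11 + A22 * B21 := by
  subst hS2 hS5 hS6 hS8 hM1 hM2 hM4 hM7 hT2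
  noncomm_ring
end
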